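/- Let ν be a probability measure on ℝ, absolutely continuous with respect to Lebesgue measure, and let μ̃ = Σ_{i=0}^{m} p_i δ_{x_i} be a discrete probability measure on ℝ^d with all p_i > 0 and distinct points x_i. Then for every ε > 0 there exists a continuous piecewise linear function φ: ℝ → ℝ^d with at most 2m breakpoints such that W_p(μ̃, φ_#ν) ≤ ε, where W_p is the p-Wasserstein distance, 1 ≤ p < ∞. -/

import Mathlib

/-!
Cut ℝ at quantiles `a₀ ≤ ⋯ ≤ a_{m-1}` of `ν` so that the `i`-th piece has `ν`-mass `pᵢ`; these
exist because the cdf of an atomless `ν` is continuous. The step map sending the `i`-th piece to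
`xᵢ` pushes `ν` forward to `μ̃` exactly. Replacing the jump at `a_k` by a linear ramp from `x_k`
to `x_{k+1}` over an interval `[a_k, b_k]` of `ν`-mass `η` gives a continuous piecewise linear `φ`
with breakpoints `a_k, b_k`. Coupling the step map with `φ` through `ν`, the two maps differ only
on the ramps, which have total mass `m η`, and there by at most `M = ∑ ‖x_{k+1} - x_k‖`; so the
transport cost is at most `m η M ^ q`, which is small with `η`.
-/

open MeasureTheory

/-- A continuous piecewise linear function `ℝ → ℝ^d` (Euclidean) with breakpoints in the
finite set `B`. -/
def IsCPwL {d : ℕ} (g : ℝ → EuclideanSpace ℝ (Fin d)) (B : Finset ℝ) : Prop :=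
  Continuous g ∧ ∀ a b : ℝ, a < b → (∀ c ∈ B, c ∉ Set.Ioo a b) →
    ∃ u v : EuclideanSpace ℝ (Fin d), ∀ t ∈ Set.Icc a b, g t = t • u + v

open Set Filter Topology ProbabilityTheory

lemma exists_pos_lt_mul_le {C δ r : ℝ} (hC : 0 ≤ C) (hδ : 0 < δ) (hr : 0 < r) :
    ∃ η, 0 < η ∧ η < r ∧ C * η ≤ δ := by
  obtain ⟨η, hη0, hη⟩ := exists_pos_mul_lt hδ C
  refine ⟨min η (r / 2), lt_min hη0 (half_pos hr), (min_le_right _ _).trans_lt (half_lt_self hr),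
    ?_⟩
  calc C * min η (r / 2) ≤ C * η := by gcongr; exact min_le_left _ _
    _ ≤ δ := hη.le

lemma Fin.clamp_val_self {m : ℕ} (i : Fin (m + 1)) : Fin.clamp i m = i :=
  Fin.ext (min_eq_left i.is_le)

lemma Fin.sum_univ_eq_sum_range_clamp {M : Type*} [AddCommMonoid M] {m : ℕ}
    (f : Fin (m + 1) → M) :
    ∑ i, f i = ∑ i ∈ Finset.range (m + 1), f (Fin.clamp i m) := by
  simp only [← Fin.sum_univ_eq_sum_range (fun i => f (Fin.clamp i m)), Fin.clamp_val_self]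

lemma sum_range_clamp_add_last_le_one {m : ℕ} {p : Fin (m + 1) → ℝ} (hp : ∀ i, 0 ≤ p i)
    (hsum : ∑ i, p i = 1) {k : ℕ} (hk : k < m) :
    ∑ i ∈ Finset.range (k + 1), p (Fin.clamp i m) + p (Fin.last m) ≤ 1 := by
  rw [← hsum, Fin.sum_univ_eq_sum_range_clamp, Finset.sum_range_succ _ m,
    Fin.clamp_eq_last m m le_rfl]
  gcongr
  · exact fun _ _ _ => hp _
  · exact hk

lemma dist_sum_smul_le {ι E : Type*} [NormedAddCommGroup E] [NormedSpace ℝ E] (s : Finset ι)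
    (v : ι → E) {f g : ι → ℝ}
    (hf : ∀ i, f i ∈ Icc 0 1) (hg : ∀ i, g i ∈ Icc 0 1) :
    dist (∑ i ∈ s, f i • v i) (∑ i ∈ s, g i • v i) ≤ ∑ i ∈ s, ‖v i‖ := by
  rw [dist_eq_norm, ← Finset.sum_sub_distrib]
  refine (norm_sum_le _ _).trans (Finset.sum_le_sum fun i _ => ?_)
  rw [← sub_smul, norm_smul]
  have : ‖f i - g i‖ ≤ 1 := by
    rw [Real.norm_eq_abs, abs_le]
    constructor <;> linarith [(hf i).1, (hf i).2, (hg i).1, (hg i).2]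
  simpa using mul_le_mul_of_nonneg_right this (norm_nonneg (v i))

lemma measure_setOf_eq_of_measure_setOf_le {α : Type*} [MeasurableSpace α] (ν : Measure α)
    [IsFiniteMeasure ν] {c : α → ℕ} (hc : Measurable c) {p : ℕ → ℝ} (hp : ∀ i, 0 ≤ p i)
    {m : ℕ} (h : ∀ j ≤ m, ν {t | c t ≤ j} = ENNReal.ofReal (∑ i ∈ Finset.range (j + 1), p i))
    {j : ℕ} (hj : j ≤ m) : ν {t | c t = j} = ENNReal.ofReal (p j) := by
  cases j with
  | zero => simpa using h 0 hj
  | succ j =>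
    have hdiff : {t | c t = j + 1} = {t | c t ≤ j + 1} \ {t | c t ≤ j} := by
      ext t; simp only [mem_ofPred_eq, Set.mem_sdiff]; omega
    have hsub : {t | c t ≤ j} ⊆ {t | c t ≤ j + 1} := fun _ => Nat.le_succ_of_le
    have hmeas : MeasurableSet {t | c t ≤ j} := hc measurableSet_Iic
    rw [hdiff, measure_sdiff hsub hmeas.nullMeasurableSet (measure_ne_top ν _), h _ hj,
      h _ (by omega), ← ENNReal.ofReal_sub _ (Finset.sum_nonneg fun i _ => hp i),
      Finset.sum_range_succ _ (j + 1), add_sub_cancel_left]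

lemma map_comp_eq_sum_smul_dirac {α β ι : Type*} [MeasurableSpace α] [MeasurableSpace β]
    [Fintype ι] [MeasurableSpace ι] [MeasurableSingletonClass ι]
    (ν : Measure α) {c : α → ι} (hc : Measurable c) {x : ι → β} (hx : Measurable x) :
    ν.map (fun t => x (c t)) = ∑ i, ν (c ⁻¹' {i}) • Measure.dirac (x i) := by
  rw [← Function.comp_def, ← Measure.map_map hx hc, Measure.map_eq_sum ν c hc,
    Measure.sum_fintype, Measure.map_finset_sum' hx.aemeasurable]
  simp only [Measure.map_smul, Measure.map_dirac' hx]

lemma integral_dist_rpow_map_prodMk_le {α E : Type*} [MeasurableSpace α] [PseudoMetricSpace E]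
    [MeasurableSpace E] [BorelSpace E] [SecondCountableTopology E] (ν : Measure α)
    [IsFiniteMeasure ν] {ψ φ : α → E} (hψ : Measurable ψ) (hφ : Measurable φ) {q : ℝ}
    (hq : 0 < q) {M : ℝ} {U : Set α} (hU : MeasurableSet U)
    (hbound : ∀ t, dist (ψ t) (φ t) ≤ M) (heq : ∀ t ∉ U, ψ t = φ t) :
    ∫ w, dist w.1 w.2 ^ q ∂(ν.map fun t => (ψ t, φ t)) ≤ ν.real U * M ^ q := by
  have hcont : Continuous fun w : E × E => dist w.1 w.2 ^ q :=
    (continuous_fst.dist continuous_snd).rpow_const fun _ => Or.inr hq.le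
  rw [integral_map (hψ.prodMk hφ).aemeasurable hcont.aestronglyMeasurable]
  calc ∫ t, dist (ψ t) (φ t) ^ q ∂ν ≤ ∫ t, U.indicator (fun _ => M ^ q) t ∂ν := by
        refine integral_mono_of_nonneg (ae_of_all _ fun t => by positivity)
          ((integrable_const _).indicator hU) (ae_of_all _ fun t => ?_)
        by_cases ht : t ∈ U
        · rw [indicator_of_mem ht]
          exact Real.rpow_le_rpow dist_nonneg (hbound t) hq.le
        · simp only [indicator_of_notMem ht, heq t ht, dist_self, Real.zero_rpow hq.ne', le_refl]
    _ = ν.real U * M ^ q := by rw [integral_indicator_const _ hU, smul_eq_mul]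

noncomputable def ramp (a b t : ℝ) : ℝ := max 0 (min 1 ((t - a) / (b - a)))

section Ramp

variable {a b t : ℝ}

lemma ramp_nonneg : 0 ≤ ramp a b t := le_max_left _ _

lemma ramp_le_one : ramp a b t ≤ 1 := max_le zero_le_one (min_le_left _ _)

lemma ramp_of_le (hab : a ≤ b) (ht : t ≤ a) : ramp a b t = 0 := by
  have : (t - a) / (b - a) ≤ 0 := div_nonpos_of_nonpos_of_nonneg (by linarith) (by linarith)
  rw [ramp, min_eq_right (by linarith), max_eq_left this]

lemma ramp_of_ge (hab : a < b) (ht : b ≤ t) : ramp a b t = 1 := by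
  have : 1 ≤ (t - a) / (b - a) := by rw [le_div_iff₀ (by linarith)]; linarith
  rw [ramp, min_eq_left this, max_eq_right zero_le_one]

lemma ramp_of_mem_Icc (ht : t ∈ Icc a b) : ramp a b t = (t - a) / (b - a) := by
  have h0 : 0 ≤ (t - a) / (b - a) := div_nonneg (by linarith [ht.1]) (by linarith [ht.1, ht.2])
  have h1 : (t - a) / (b - a) ≤ 1 :=
    div_le_one_of_le₀ (by linarith [ht.2]) (by linarith [ht.1, ht.2])
  rw [ramp, min_eq_right h1, max_eq_right h0]

lemma continuous_ramp (a b : ℝ) : Continuous (ramp a b) := by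
  unfold ramp; fun_prop

lemma ramp_eq_ite_of_notMem_Ioo (hab : a < b) (ht : t ∉ Ioo a b) :
    ramp a b t = if a < t then 1 else 0 := by
  split_ifs with hat
  · exact ramp_of_ge hab (not_lt.1 fun htb => ht ⟨hat, htb⟩)
  · exact ramp_of_le hab.le (not_lt.1 hat)

lemma exists_ramp_eq_affine (hab : a < b) {s u : ℝ} (ha : a ∉ Ioo s u) (hb : b ∉ Ioo s u) :
    ∃ α β : ℝ, ∀ t ∈ Icc s u, ramp a b t = α * t + β := by
  by_cases hua : u ≤ a
  · exact ⟨0, 0, fun t ht => by rw [ramp_of_le hab.le (ht.2.trans hua)]; ring⟩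
  by_cases hbs : b ≤ s
  · exact ⟨0, 1, fun t ht => by rw [ramp_of_ge hab (hbs.trans ht.1)]; ring⟩
  have has : a ≤ s := not_lt.1 fun h => ha ⟨h, lt_of_not_ge hua⟩
  have hub : u ≤ b := not_lt.1 fun h => hb ⟨lt_of_not_ge hbs, h⟩
  refine ⟨1 / (b - a), -a / (b - a), fun t ht => ?_⟩
  rw [ramp_of_mem_Icc ⟨has.trans ht.1, ht.2.trans hub⟩]
  ring

end Ramp

section IsCPwL

variable {d : ℕ} {f g : ℝ → EuclideanSpace ℝ (Fin d)} {B C : Finset ℝ}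

lemma isCPwL_const (v : EuclideanSpace ℝ (Fin d)) (B : Finset ℝ) : IsCPwL (fun _ => v) B :=
  ⟨continuous_const, fun _ _ _ _ => ⟨0, v, fun t _ => by rw [smul_zero, zero_add]⟩⟩

lemma IsCPwL.mono (hf : IsCPwL f B) (hBC : B ⊆ C) : IsCPwL f C :=
  ⟨hf.1, fun a b hab hC => hf.2 a b hab fun c hc => hC c (hBC hc)⟩

lemma IsCPwL.add (hf : IsCPwL f B) (hg : IsCPwL g B) : IsCPwL (fun t => f t + g t) B := by
  refine ⟨hf.1.add hg.1, fun a b hab hB => ?_⟩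
  obtain ⟨u, v, huv⟩ := hf.2 a b hab hB
  obtain ⟨u', v', huv'⟩ := hg.2 a b hab hB
  refine ⟨u + u', v + v', fun t ht => ?_⟩
  simp only [huv t ht, huv' t ht, smul_add]
  abel

lemma IsCPwL.sum {ι : Type*} {f : ι → ℝ → EuclideanSpace ℝ (Fin d)} (s : Finset ι)
    (h : ∀ i ∈ s, IsCPwL (f i) B) : IsCPwL (fun t => ∑ i ∈ s, f i t) B := by
  classical
  induction s using Finset.induction_on with
  | empty => simpa using isCPwL_const 0 B
  | insert i s hi ih =>
    simp_rw [Finset.sum_insert hi]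
    exact (h i (s.mem_insert_self i)).add (ih fun j hj => h j (Finset.mem_insert_of_mem hj))

lemma isCPwL_ramp_smul {a b : ℝ} (hab : a < b) (v : EuclideanSpace ℝ (Fin d)) :
    IsCPwL (fun t => ramp a b t • v) {a, b} := by
  refine ⟨(continuous_ramp a b).smul continuous_const, fun s u _ hB => ?_⟩
  obtain ⟨α, β, h⟩ := exists_ramp_eq_affine hab (hB a (by simp)) (hB b (by simp))
  exact ⟨α • v, β • v, fun t ht => by simp only [h t ht, mul_comm α t, add_smul, mul_smul]⟩

end IsCPwL

section Paths

variable {E : Type*} [NormedAddCommGroup E] [NormedSpace ℝ E]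

noncomputable def rampPath (m : ℕ) (a b : ℕ → ℝ) (x : ℕ → E) (t : ℝ) : E :=
  x 0 + ∑ k ∈ Finset.range m, ramp (a k) (b k) t • (x (k + 1) - x k)

noncomputable def numCutsBelow (m : ℕ) (a : ℕ → ℝ) (t : ℝ) : ℕ :=
  ((Finset.range m).filter fun k => a k < t).card

lemma numCutsBelow_le (m : ℕ) (a : ℕ → ℝ) (t : ℝ) : numCutsBelow m a t ≤ m :=
  (Finset.card_filter_le _ _).trans_eq (Finset.card_range m)

lemma measurable_numCutsBelow (m : ℕ) (a : ℕ → ℝ) : Measurable (numCutsBelow m a) := by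
  unfold numCutsBelow
  simp only [Finset.card_filter]
  exact Finset.measurable_sum _ fun _ _ => Measurable.ite measurableSet_Ioi measurable_const
    measurable_const

variable {m : ℕ} {a b : ℕ → ℝ}

lemma continuous_rampPath (x : ℕ → E) : Continuous (rampPath m a b x) :=
  continuous_const.add
    (continuous_finsetSum _ fun _ _ => (continuous_ramp _ _).smul continuous_const)

lemma lt_numCutsBelow_iff (ha : MonotoneOn a (Iio m)) {k : ℕ} (hk : k < m) (t : ℝ) :
    k < numCutsBelow m a t ↔ a k < t := by
  constructor
  · intro h
    by_contra! hkt
    have hsub : (Finset.range m).filter (fun j => a j < t) ⊆ Finset.range k := fun j hj => by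
      rw [Finset.mem_filter, Finset.mem_range] at hj
      exact Finset.mem_range.2 (not_le.1 fun hkj => (hkt.trans (ha hk hj.1 hkj)).not_gt hj.2)
    exact h.not_ge (by simpa [numCutsBelow] using Finset.card_le_card hsub)
  · intro h
    have hsub : Finset.range (k + 1) ⊆ (Finset.range m).filter (fun j => a j < t) := fun j hj => by
      rw [Finset.mem_range] at hj
      exact Finset.mem_filter.2 ⟨Finset.mem_range.2 (by omega),
        (ha (show j < m by omega) hk (by omega)).trans_lt h⟩
    simpa [numCutsBelow] using Finset.card_le_card hsub

lemma numCutsBelow_le_iff (ha : MonotoneOn a (Iio m)) {k : ℕ} (hk : k < m) (t : ℝ) :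
    numCutsBelow m a t ≤ k ↔ t ≤ a k := by
  rw [← not_lt, lt_numCutsBelow_iff ha hk, not_lt]

lemma add_sum_range_ite_smul_sub {j : ℕ} (hj : j ≤ m) (x : ℕ → E) :
    x 0 + ∑ k ∈ Finset.range m, (if k < j then (1 : ℝ) else 0) • (x (k + 1) - x k) = x j := by
  simp only [ite_smul, one_smul, zero_smul, ← Finset.sum_filter]
  rw [show (Finset.range m).filter (· < j) = Finset.range j by
      ext k; simp only [Finset.mem_filter, Finset.mem_range]; omega,
    Finset.sum_range_sub]
  abel

lemma apply_numCutsBelow (ha : MonotoneOn a (Iio m)) (x : ℕ → E) (t : ℝ) :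
    x (numCutsBelow m a t) =
      x 0 + ∑ k ∈ Finset.range m, (if a k < t then (1 : ℝ) else 0) • (x (k + 1) - x k) := by
  rw [← add_sum_range_ite_smul_sub (numCutsBelow_le m a t) x]
  congr 1
  refine Finset.sum_congr rfl fun k hk => ?_
  simp only [lt_numCutsBelow_iff ha (Finset.mem_range.1 hk)]

lemma dist_apply_numCutsBelow_rampPath_le (ha : MonotoneOn a (Iio m)) (x : ℕ → E) (t : ℝ) :
    dist (x (numCutsBelow m a t)) (rampPath m a b x t) ≤
      ∑ k ∈ Finset.range m, ‖x (k + 1) - x k‖ := by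
  rw [apply_numCutsBelow ha x, rampPath, dist_add_left]
  refine dist_sum_smul_le _ _ (fun k => ?_) fun _ => ⟨ramp_nonneg, ramp_le_one⟩
  split_ifs <;> simp

lemma apply_numCutsBelow_eq_rampPath (ha : MonotoneOn a (Iio m)) (hab : ∀ k < m, a k < b k)
    (x : ℕ → E) {t : ℝ} (ht : t ∉ ⋃ k ∈ Finset.range m, Ioo (a k) (b k)) :
    x (numCutsBelow m a t) = rampPath m a b x t := by
  rw [apply_numCutsBelow ha x, rampPath]
  congr 1
  refine Finset.sum_congr rfl fun k hk => ?_
  rw [ramp_eq_ite_of_notMem_Ioo (hab k (Finset.mem_range.1 hk)) fun h => ht (mem_biUnion hk h)]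

end Paths

lemma isCPwL_rampPath {d m : ℕ} {a b : ℕ → ℝ} (hab : ∀ k < m, a k < b k)
    (x : ℕ → EuclideanSpace ℝ (Fin d)) :
    IsCPwL (rampPath m a b x) ((Finset.range m).image a ∪ (Finset.range m).image b) := by
  refine (isCPwL_const (x 0) _).add (IsCPwL.sum _ fun k hk => ?_)
  refine (isCPwL_ramp_smul (hab k (Finset.mem_range.1 hk)) _).mono ?_
  rw [Finset.insert_subset_iff, Finset.singleton_subset_iff]
  exact ⟨Finset.mem_union_left _ (Finset.mem_image_of_mem a hk),
    Finset.mem_union_right _ (Finset.mem_image_of_mem b hk)⟩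

section Quantile

variable (ν : Measure ℝ)

lemma continuous_cdf [IsProbabilityMeasure ν] [NullSingletonClass ν] : Continuous (cdf ν) := by
  refine continuous_iff_continuousAt.2 fun t => ?_
  rw [(monotone_cdf ν).continuousAt_iff_leftLim_eq_rightLim, (cdf ν).rightLim_eq]
  have hjump := (cdf ν).measure_singleton t
  rw [measure_cdf, measure_singleton, eq_comm, ENNReal.ofReal_eq_zero] at hjump
  linarith [(monotone_cdf ν).leftLim_le (le_refl t)]

noncomputable def quantile (u : ℝ) : ℝ := sInf {t | u ≤ cdf ν t}

variable {ν} {u : ℝ}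

lemma bddBelow_setOf_le_cdf (hu : 0 < u) : BddBelow {t | u ≤ cdf ν t} := by
  obtain ⟨l, hl⟩ := ((tendsto_cdf_atBot ν).eventually_lt_const hu).exists
  exact ⟨l, fun t ht => ((monotone_cdf ν).reflect_lt (hl.trans_le ht)).le⟩

lemma nonempty_setOf_le_cdf (hu : u < 1) : {t | u ≤ cdf ν t}.Nonempty :=
  ((tendsto_cdf_atTop ν).eventually_const_lt hu).exists.imp fun _ h => h.le

lemma quantile_mono {u' : ℝ} (hu : 0 < u) (hu' : u' < 1) (huu' : u ≤ u') :
    quantile ν u ≤ quantile ν u' :=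
  csInf_le_csInf (bddBelow_setOf_le_cdf hu) (nonempty_setOf_le_cdf hu')
    fun _ ht => huu'.trans ht

lemma cdf_quantile [IsProbabilityMeasure ν] [NullSingletonClass ν] (hu0 : 0 < u) (hu1 : u < 1) :
    cdf ν (quantile ν u) = u := by
  have hclosed : IsClosed {t | u ≤ cdf ν t} := isClosed_le continuous_const (continuous_cdf ν)
  have hmem : u ≤ cdf ν (quantile ν u) :=
    hclosed.csInf_mem (nonempty_setOf_le_cdf hu1) (bddBelow_setOf_le_cdf hu0)
  have hleft : ∀ᶠ t in 𝓝[<] quantile ν u, cdf ν t ≤ u :=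
    eventually_nhdsWithin_of_forall fun t ht =>
      (lt_of_not_ge fun h => (csInf_le (bddBelow_setOf_le_cdf hu0) h).not_gt ht).le
  exact le_antisymm
    (le_of_tendsto ((continuous_cdf ν).continuousAt.tendsto.mono_left nhdsWithin_le_nhds) hleft)
    hmem

end Quantile

lemma measureReal_biUnion_Ioo_le (ν : Measure ℝ) [IsProbabilityMeasure ν] {m : ℕ}
    {a b : ℕ → ℝ} {η : ℝ} (hη : 0 ≤ η) (hcdf : ∀ k < m, cdf ν (b k) = cdf ν (a k) + η) :
    ν.real (⋃ k ∈ Finset.range m, Ioo (a k) (b k)) ≤ m * η := by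
  refine (measureReal_biUnion_finset_le _ _).trans ?_
  calc ∑ k ∈ Finset.range m, ν.real (Ioo (a k) (b k))
      ≤ ∑ k ∈ Finset.range m, ν.real (Ioc (a k) (b k)) :=
        Finset.sum_le_sum fun k _ => measureReal_mono Ioo_subset_Ioc_self
    _ = ∑ k ∈ Finset.range m, η := by
        refine Finset.sum_congr rfl fun k hk => ?_
        rw [measureReal_def, ← measure_cdf ν, StieltjesFunction.measure_Ioc,
          hcdf k (Finset.mem_range.1 hk), add_sub_cancel_left, ENNReal.toReal_ofReal hη]
    _ = m * η := by rw [Finset.sum_const, Finset.card_range, nsmul_eq_mul]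

lemma exists_quantile_cuts (ν : Measure ℝ) [IsProbabilityMeasure ν] [NullSingletonClass ν]
    {m : ℕ} {T : ℕ → ℝ} (hT : MonotoneOn T (Iio m)) {η : ℝ} (hη : 0 < η)
    (hT0 : ∀ k < m, 0 < T k) (hT1 : ∀ k < m, T k + η < 1) :
    ∃ a b : ℕ → ℝ, MonotoneOn a (Iio m) ∧ (∀ k < m, a k < b k) ∧
      (∀ k < m, cdf ν (a k) = T k) ∧ ∀ k < m, cdf ν (b k) = cdf ν (a k) + η := by
  have hcdf_a : ∀ k < m, cdf ν (quantile ν (T k)) = T k := fun k hk =>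
    cdf_quantile (hT0 k hk) (by linarith [hT1 k hk])
  have hcdf_b : ∀ k < m, cdf ν (quantile ν (T k + η)) = cdf ν (quantile ν (T k)) + η :=
    fun k hk => by rw [hcdf_a k hk, cdf_quantile (by linarith [hT0 k hk]) (hT1 k hk)]
  refine ⟨fun k => quantile ν (T k), fun k => quantile ν (T k + η), ?_,
    fun k hk => (monotone_cdf ν).reflect_lt (by linarith [hcdf_b k hk]), hcdf_a, hcdf_b⟩
  exact fun j hj k hk hjk => quantile_mono (hT0 j hj) (by linarith [hT1 k hk]) (hT hj hk hjk)

lemma map_apply_clamp_numCutsBelow {β : Type*} [MeasurableSpace β] (ν : Measure ℝ)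
    [IsProbabilityMeasure ν] {m : ℕ} {a : ℕ → ℝ} (ha : MonotoneOn a (Iio m))
    {p : Fin (m + 1) → ℝ} (hp : ∀ i, 0 ≤ p i) (hsum : ∑ i, p i = 1)
    (hcdf : ∀ k < m, cdf ν (a k) = ∑ i ∈ Finset.range (k + 1), p (Fin.clamp i m))
    (x : Fin (m + 1) → β) :
    ν.map (fun t => x (Fin.clamp (numCutsBelow m a t) m)) =
      ∑ i, ENNReal.ofReal (p i) • Measure.dirac (x i) := by
  have hc := measurable_numCutsBelow m a
  have hle : ∀ j ≤ m, ν {t | numCutsBelow m a t ≤ j} =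
      ENNReal.ofReal (∑ i ∈ Finset.range (j + 1), p (Fin.clamp i m)) := by
    intro j hj
    rcases hj.lt_or_eq with hj | rfl
    · rw [← hcdf j hj, ofReal_cdf]
      exact congrArg ν (ext fun t => numCutsBelow_le_iff ha hj t)
    · rw [show {t | numCutsBelow j a t ≤ j} = univ from eq_univ_of_forall (numCutsBelow_le j a),
        measure_univ, ← Fin.sum_univ_eq_sum_range_clamp, hsum, ENNReal.ofReal_one]
  rw [map_comp_eq_sum_smul_dirac ν (c := fun t => Fin.clamp (numCutsBelow m a t) m)
    (measurable_from_nat (f := fun n => Fin.clamp n m) |>.comp hc) measurable_from_top]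
  refine Finset.sum_congr rfl fun i _ => ?_
  have hpre : (fun t => Fin.clamp (numCutsBelow m a t) m) ⁻¹' {i} =
      {t | numCutsBelow m a t = i} := by
    ext t
    simp [Fin.ext_iff, min_eq_left (numCutsBelow_le m a t)]
  rw [hpre, measure_setOf_eq_of_measure_setOf_le ν hc (fun _ => hp _) hle i.is_le,
    Fin.clamp_val_self]

lemma integral_dist_rpow_map_numCutsBelow_rampPath_le {E : Type*} [NormedAddCommGroup E]
    [NormedSpace ℝ E] [MeasurableSpace E] [BorelSpace E] [SecondCountableTopology E]
    (ν : Measure ℝ) [IsProbabilityMeasure ν] {m : ℕ} {a b : ℕ → ℝ} (ha : MonotoneOn a (Iio m))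
    (hab : ∀ k < m, a k < b k) {η : ℝ} (hη : 0 ≤ η)
    (hcdf : ∀ k < m, cdf ν (b k) = cdf ν (a k) + η) (x : ℕ → E) {q : ℝ} (hq : 0 < q) :
    ∫ w, dist w.1 w.2 ^ q ∂(ν.map fun t => (x (numCutsBelow m a t), rampPath m a b x t)) ≤
      m * η * (∑ k ∈ Finset.range m, ‖x (k + 1) - x k‖) ^ q := by
  calc _ ≤ ν.real (⋃ k ∈ Finset.range m, Ioo (a k) (b k)) *
          (∑ k ∈ Finset.range m, ‖x (k + 1) - x k‖) ^ q :=
        integral_dist_rpow_map_prodMk_le ν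
          ((measurable_from_nat (f := x)).comp (measurable_numCutsBelow m a))
          ((continuous_rampPath x).measurable) hq
          (Finset.measurableSet_biUnion _ fun _ _ => measurableSet_Ioo)
          (dist_apply_numCutsBelow_rampPath_le ha x) fun _ ht =>
            apply_numCutsBelow_eq_rampPath ha hab x ht
    _ ≤ _ := by gcongr; exact measureReal_biUnion_Ioo_le ν hη hcdf

/-- `W_q(μ̃, φ_#ν) ≤ ε` is expressed by a coupling `γ` of `μ̃` and `φ_#ν` of `q`-th transport
cost at most `ε ^ q` (the exponent called `p` in the informal statement is `q` here). -/
theorem exists_cpwl_pushforward_wasserstein_close_general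
    {d m : ℕ} (ν : Measure ℝ) [IsProbabilityMeasure ν] (hν : ν ≪ volume)
    (p : Fin (m + 1) → ℝ) (hp : ∀ i, 0 < p i) (hsum : ∑ i, p i = 1)
    (x : Fin (m + 1) → EuclideanSpace ℝ (Fin d))
    (q : ℝ) (hq : 1 ≤ q) (ε : ℝ) (hε : 0 < ε) :
    ∃ (φ : ℝ → EuclideanSpace ℝ (Fin d)) (B : Finset ℝ), B.card ≤ 2 * m ∧ IsCPwL φ B ∧
      ∃ γ : Measure (EuclideanSpace ℝ (Fin d) × EuclideanSpace ℝ (Fin d)),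
        γ.map Prod.fst = ∑ i, ENNReal.ofReal (p i) • Measure.dirac (x i) ∧
        γ.map Prod.snd = ν.map φ ∧
        ∫ w, dist w.1 w.2 ^ q ∂γ ≤ ε ^ q := by
  have : NullSingletonClass ν := ⟨fun _ => hν Real.volume_singleton⟩
  set x' : ℕ → EuclideanSpace ℝ (Fin d) := fun n => x (Fin.clamp n m)
  set M := ∑ k ∈ Finset.range m, ‖x' (k + 1) - x' k‖
  obtain ⟨η, hη0, hηp, hηε⟩ := exists_pos_lt_mul_le (C := m * M ^ q) (by positivity)
    (Real.rpow_pos_of_pos hε q) (hp (Fin.last m))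
  obtain ⟨a, b, ha, hab, hcdf_a, hcdf_b⟩ := exists_quantile_cuts ν
    (T := fun k => ∑ i ∈ Finset.range (k + 1), p (Fin.clamp i m))
    (fun j _ k _ hjk => Finset.sum_le_sum_of_subset_of_nonneg
      (Finset.range_subset_range.2 (by omega)) fun _ _ _ => (hp _).le) hη0
    (fun _ _ => Finset.sum_pos (fun _ _ => hp _) Finset.nonempty_range_add_one)
    (fun k hk => by linarith [sum_range_clamp_add_last_le_one (fun i => (hp i).le) hsum hk])
  refine ⟨rampPath m a b x', _, ?_, isCPwL_rampPath hab x',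
    ν.map fun t => (x' (numCutsBelow m a t), rampPath m a b x' t), ?_, ?_, ?_⟩
  · exact (Finset.card_union_le _ _).trans (by
      grw [Finset.card_image_le, Finset.card_image_le, Finset.card_range]; omega)
  · exact (Measure.fst_map_prodMk (continuous_rampPath x').measurable).trans
      (map_apply_clamp_numCutsBelow ν ha (fun i => (hp i).le) hsum hcdf_a x)
  · exact Measure.snd_map_prodMk
      ((measurable_from_nat (f := x')).comp (measurable_numCutsBelow m a))
  · calc _ ≤ m * η * M ^ q :=
        integral_dist_rpow_map_numCutsBelow_rampPath_le ν ha hab hη0.le hcdf_b x' (by linarith)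
      _ ≤ ε ^ q := by linarith

/-- for any absolutely continuous ν on ℝ, any discrete measure
μ̃ = Σ_{i=0}^m p_i δ_{x_i} on ℝ^d with positive weights and distinct atoms, and any ε > 0,
there is a continuous piecewise linear φ with at most 2m breakpoints such that
W_p(μ̃, φ_#ν) ≤ ε; we express this by exhibiting a coupling γ of μ̃ and φ_#ν with
p-th transport cost at most ε^p. -/
theorem exists_cpwl_pushforward_wasserstein_close
    {d m : ℕ} (ν : Measure ℝ) [IsProbabilityMeasure ν] (hν : ν ≪ volume)
    (p : Fin (m + 1) → ℝ) (hp : ∀ i, 0 < p i) (hsum : ∑ i, p i = 1)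
    (x : Fin (m + 1) → EuclideanSpace ℝ (Fin d)) (hx : Function.Injective x)
    (q : ℝ) (hq : 1 ≤ q) (ε : ℝ) (hε : 0 < ε) :
    ∃ (φ : ℝ → EuclideanSpace ℝ (Fin d)) (B : Finset ℝ), B.card ≤ 2 * m ∧ IsCPwL φ B ∧
      ∃ γ : Measure (EuclideanSpace ℝ (Fin d) × EuclideanSpace ℝ (Fin d)),
        γ.map Prod.fst = ∑ i, ENNReal.ofReal (p i) • Measure.dirac (x i) ∧
        γ.map Prod.snd = ν.map φ ∧
        ∫ w, dist w.1 w.2 ^ q ∂γ ≤ ε ^ q :=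
  exists_cpwl_pushforward_wasserstein_close_general ν hν p hp hsum x q hq ε hε
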